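/- Let β > 0, θ ∈ ℝ and x₀ ∈ ℝ. Define p(y) = Φ(√β·(x₀ − y − θ)), a(y) = (θ − p(y))/(1 − p(y)), and the regime's objective F(y) = ∫₀^{a(y)} (θ − α − (1 − α)·p(y)) dα − y²/2. Then on any open set of y where a(y) ∈ (0,1), F is differentiable and F′(y) = √β·φ(√β·(x₀ − y − θ))·a(y)·(1 − a(y)/2) − y. Consequently, any interior local maximum y₀ with a(y₀) ∈ (0,1) satisfies y₀ = √β·φ(√β·(x₀ − y₀ − θ))·a(y₀)·(1 − a(y₀)/2). -/

import Mathlib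

open Real Set MeasureTheory

/-- The standard normal density `φ(t) = exp(−t²/2)/√(2π)`. -/
noncomputable def stdNormalPDF (t : ℝ) : ℝ :=
  Real.exp (-(t ^ 2) / 2) / Real.sqrt (2 * Real.pi)

/-- The standard normal cumulative distribution function `Φ`. -/
noncomputable def stdNormalCDF (x : ℝ) : ℝ :=
  ∫ t in Set.Iic x, stdNormalPDF t

/-!
Writing `q = p(y)`, the integrand is affine in `α` and vanishes at `α = a(y)`, so the
integral is the triangle area `(θ − q)² / (2(1 − q))`. Its derivative in `q` is
`−a(1 − a/2)`, and `p′(y) = −√β·φ(√β(x₀ − y − θ))`; the chain rule gives `F′`, and the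
first-order condition is Fermat's theorem.
-/

lemma continuous_stdNormalPDF : Continuous stdNormalPDF := by
  unfold stdNormalPDF; fun_prop

lemma integrable_stdNormalPDF : Integrable stdNormalPDF := by
  have h : stdNormalPDF = fun t => Real.exp (-(1 / 2) * t ^ 2) * (1 / Real.sqrt (2 * π)) := by
    funext t; unfold stdNormalPDF; ring_nf
  rw [h]
  exact (integrable_exp_neg_mul_sq (by norm_num)).mul_const _

lemma stdNormalCDF_eq_integral_add (x : ℝ) :
    stdNormalCDF x = (∫ t in (0 : ℝ)..x, stdNormalPDF t) + stdNormalCDF 0 := by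
  rw [stdNormalCDF, stdNormalCDF, ← intervalIntegral.integral_Iic_sub_Iic
    integrable_stdNormalPDF.integrableOn integrable_stdNormalPDF.integrableOn]
  ring

lemma hasDerivAt_stdNormalCDF (x : ℝ) : HasDerivAt stdNormalCDF (stdNormalPDF x) x := by
  rw [show stdNormalCDF = _ from funext stdNormalCDF_eq_integral_add]
  exact (intervalIntegral.integral_hasDerivAt_right
    integrable_stdNormalPDF.intervalIntegrable
    continuous_stdNormalPDF.aestronglyMeasurable.stronglyMeasurableAtFilter
    continuous_stdNormalPDF.continuousAt).add_const _

lemma hasDerivAt_stdNormalCDF_affine (s c y : ℝ) :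
    HasDerivAt (fun z => stdNormalCDF (s * (c - z))) (-(s * stdNormalPDF (s * (c - y)))) y := by
  have hinner : HasDerivAt (fun z => s * (c - z)) (-s) y := by
    simpa using ((hasDerivAt_id y).const_sub c).const_mul s
  exact ((hasDerivAt_stdNormalCDF _).comp y hinner).congr_deriv (by ring)

lemma integral_sub_sub_one_sub_mul (θ q b : ℝ) :
    ∫ α in (0 : ℝ)..b, (θ - α - (1 - α) * q) = (θ - q) * b - (1 - q) * (b ^ 2 / 2) := by
  have hrw : (fun α => θ - α - (1 - α) * q) = fun α => (θ - q) - (1 - q) * α := by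
    funext α; ring
  rw [hrw, intervalIntegral.integral_sub intervalIntegrable_const
    ((by fun_prop : Continuous fun α => (1 - q) * α).intervalIntegrable _ _),
    intervalIntegral.integral_const_mul, integral_id, intervalIntegral.integral_const]
  simp only [sub_zero, smul_eq_mul]
  ring

lemma integral_surplus_eq {θ q : ℝ} (hq : 1 - q ≠ 0) :
    ∫ α in (0 : ℝ)..(θ - q) / (1 - q), (θ - α - (1 - α) * q) = (θ - q) ^ 2 / (2 * (1 - q)) := by
  rw [integral_sub_sub_one_sub_mul]
  field_simp
  ring

lemma hasDerivAt_sq_sub_div_one_sub {θ q : ℝ} (hq : 1 - q ≠ 0) :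
    HasDerivAt (fun u => (θ - u) ^ 2 / (2 * (1 - u)))
      (-((θ - q) / (1 - q) * (1 - (θ - q) / (1 - q) / 2))) q := by
  have hnum : HasDerivAt (fun u => (θ - u) ^ 2) (-(2 * (θ - q))) q := by
    simpa using ((hasDerivAt_id q).const_sub θ).fun_pow 2
  have hden : HasDerivAt (fun u => 2 * (1 - u)) (-2) q := by
    simpa using ((hasDerivAt_id q).const_sub 1).const_mul 2
  refine (hnum.div hden (mul_ne_zero two_ne_zero hq)).congr_deriv ?_
  field_simp
  ring

theorem regime_first_order_condition_general
    (β θ x₀ : ℝ) (p a F : ℝ → ℝ)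
    (hp : ∀ y : ℝ, p y = stdNormalCDF (Real.sqrt β * (x₀ - y - θ)))
    (ha : ∀ y : ℝ, a y = (θ - p y) / (1 - p y))
    (hF : ∀ y : ℝ,
      F y = (∫ α in (0 : ℝ)..(a y), (θ - α - (1 - α) * p y)) - y ^ 2 / 2) :
    (∀ y : ℝ, a y ∈ Set.Ioo (0 : ℝ) 1 →
      HasDerivAt F
        (Real.sqrt β * stdNormalPDF (Real.sqrt β * (x₀ - y - θ)) * a y * (1 - a y / 2) - y)
        y) ∧
    (∀ y₀ : ℝ, a y₀ ∈ Set.Ioo (0 : ℝ) 1 → IsLocalMax F y₀ →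
      y₀ = Real.sqrt β * stdNormalPDF (Real.sqrt β * (x₀ - y₀ - θ)) * a y₀
        * (1 - a y₀ / 2)) := by
  have hp' : ∀ y, HasDerivAt p (-(√β * stdNormalPDF (√β * (x₀ - y - θ)))) y := fun y => by
    rw [show p = fun z => stdNormalCDF (√β * (x₀ - θ - z)) from
      funext fun z => by rw [hp, sub_right_comm], sub_right_comm x₀ y]
    exact hasDerivAt_stdNormalCDF_affine (√β) (x₀ - θ) y
  have hF_eq : ∀ y, 1 - p y ≠ 0 → F y = (θ - p y) ^ 2 / (2 * (1 - p y)) - y ^ 2 / 2 :=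
    fun y hy => by rw [hF, ha, integral_surplus_eq hy]
  have hderiv : ∀ y, a y ∈ Ioo (0 : ℝ) 1 →
      HasDerivAt F (√β * stdNormalPDF (√β * (x₀ - y - θ)) * a y * (1 - a y / 2) - y) y := by
    intro y hy
    have hpy : 1 - p y ≠ 0 := fun h => hy.1.ne' (by rw [ha, h, div_zero])
    have hp_cont : Continuous p := continuous_iff_continuousAt.2 fun z => (hp' z).continuousAt
    have hnear : ∀ᶠ z in nhds y, 1 - p z ≠ 0 :=
      (continuous_const.sub hp_cont).continuousAt.eventually_ne hpy
    have hG := ((hasDerivAt_sq_sub_div_one_sub (θ := θ) hpy).comp y (hp' y)).sub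
      (by simpa using ((hasDerivAt_id y).pow 2).div_const 2 : HasDerivAt (fun z => z ^ 2 / 2) y y)
    refine (hG.congr_of_eventuallyEq (hnear.mono hF_eq)).congr_deriv ?_
    rw [ha]
    ring
  exact ⟨hderiv, fun y₀ hy₀ hmax => by linarith [hmax.hasDerivAt_eq_zero (hderiv y₀ hy₀)]⟩

/-- With `p(y) = Φ(√β(x₀ − y − θ))`, `a(y) = (θ − p(y))/(1 − p(y))`
and the regime's objective `F(y) = ∫₀^{a(y)} (θ − α − (1 − α)p(y)) dα − y²/2`: wherever
`a(y) ∈ (0,1)`, `F` is differentiable with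
`F′(y) = √β·φ(√β(x₀ − y − θ))·a(y)(1 − a(y)/2) − y`; consequently any interior local
maximum `y₀` with `a(y₀) ∈ (0,1)` satisfies
`y₀ = √β·φ(√β(x₀ − y₀ − θ))·a(y₀)(1 − a(y₀)/2)`. -/
theorem regime_first_order_condition
    (β θ x₀ : ℝ) (hβ : 0 < β) (p a F : ℝ → ℝ)
    (hp : ∀ y : ℝ, p y = stdNormalCDF (Real.sqrt β * (x₀ - y - θ)))
    (ha : ∀ y : ℝ, a y = (θ - p y) / (1 - p y))
    (hF : ∀ y : ℝ,
      F y = (∫ α in (0 : ℝ)..(a y), (θ - α - (1 - α) * p y)) - y ^ 2 / 2) :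
    (∀ y : ℝ, a y ∈ Set.Ioo (0 : ℝ) 1 →
      HasDerivAt F
        (Real.sqrt β * stdNormalPDF (Real.sqrt β * (x₀ - y - θ)) * a y * (1 - a y / 2) - y)
        y) ∧
    (∀ y₀ : ℝ, a y₀ ∈ Set.Ioo (0 : ℝ) 1 → IsLocalMax F y₀ →
      y₀ = Real.sqrt β * stdNormalPDF (Real.sqrt β * (x₀ - y₀ - θ)) * a y₀
        * (1 - a y₀ / 2)) :=
  regime_first_order_condition_general β θ x₀ p a F hp ha hF
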